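/- arXiv:2505.23316 — 2 statements merged into one kernel-verified Lean document; each statement's English description precedes it below -/
import Mathlib

section
/- (Theorem 4.1) Let Y be a nonempty finite type, H ⊆ Y a nonempty proper subset, μ ∈ Δ with μ(y) > 0 for all y ∈ Y, π_ref ∈ Δ, μ̂ a probability distribution on Y with μ̂(y) = 0 for all y ∈ H, ŝ : Y → ℝ with ∑_y μ̂(y)·ŝ(y) = 0, and α, β > 0. Define L_eDPO(π) := −β·∑_y μ̂(y)·ŝ(y)·log π(y) + (α/2)·∑_{y1, y2 ∈ Y} μ(y1)·μ(y2)·KLB(σ(r_π(y1) − r_π(y2))) on Δ, with r_π(y) := β·log(π(y)/π_ref(y)). On the hyper-response simplex Δ_H := {(ρ, ρH) : ρ(y) > 0 for y ∉ H, ρH > 0, ∑_{y ∉ H} ρ(y) + ρH = 1}, define the PRO loss L_PRO(ρ, ρH) := −β·∑_{y ∉ H} μ̂(y)·ŝ(y)·log ρ(y) + (α/2)·∑_{z1, z2} μ_H(z1)·μ_H(z2)·KLB(σ(r(z1) − r(z2))), where z ranges over the elements y ∉ H together with one aggregated element H, μ_H(y) := μ(y) for y ∉ H and μ_H(H) :=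 ∑_{y ∈ H} μ(y), r(y) := β·log(ρ(y)/π_ref(y)) for y ∉ H and r(H) := β·log(ρH / ∑_{y ∈ H} π_ref(y)). If π* ∈ Δ minimizes L_eDPO over Δ and (ρ*, ρH*) ∈ Δ_H minimizes L_PRO over Δ_H, then there exists C > 0 such that: π*(y) = C·π_ref(y) for every y ∈ H; ρ*(y) = π*(y) for every y ∉ H; and ρH* = ∑_{y ∈ H} π*(y) = C·∑_{y ∈ H} π_ref(y). -/
noncomputable def sig (t : ℝ) : ℝ := 1 / (1 + Real.exp (-t))

noncomputable def KLB (q : ℝ) : ℝ :=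
  (1/2) * Real.log ((1/2) / q) + (1/2) * Real.log ((1/2) / (1 - q))

/-!
Both losses depend on the policy only through the implicit reward `r = β log (π / π_ref)`: up to
an additive constant they are `J r = (α/2) ∑∑ μ μ f (r y₁ - r y₂) - ∑ w r` with `w = μ̂ ŝ` and
`f = KLB ∘ σ`, where `f` is strictly convex. Since `∑ w = 0`, `J` is invariant under adding a
constant to `r`, so minimizing over the simplex is minimizing `J` over all of `ℝ^Y`, and by strict
convexity the minimizers differ only by constants.

Collapsing `H` to a single hyper-response of weight `∑_H μ` whose reward is the `μ`-weighted mean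
of `r` over `H` does not increase `J` (Jensen; `w` vanishes on `H`), and does not change it when
`r` is constant on `H`. Expanding the PRO minimizer `ρ*` over `H` proportionally to `π_ref` thus
gives a policy whose reward `r'` satisfies `J r' = J_PRO (r ρ*) ≤ J_PRO (collapsed r*) ≤ J r*`,
where `r*` is the reward of `π*`. Hence `r' - r*` is constant, and normalization makes the
expanded policy equal to `π*`.
-/

section Sigmoid

open Real Set

lemma sig_strictMono : StrictMono sig := fun s t hst => by
  unfold sig
  gcongr

lemma KLB_sig (t : ℝ) : KLB (sig t) = log (1 + exp (-t)) + t / 2 - log 2 := by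
  have h1 : (1 / 2) / sig t = (1 + exp (-t)) / 2 := by unfold sig; field_simp
  have h2 : (1 / 2) / (1 - sig t) = (1 + exp (-t)) / 2 * exp t := by
    unfold sig; rw [exp_neg]; field_simp; ring
  rw [KLB, h1, h2, log_mul (by positivity) (exp_pos t).ne', log_exp,
    log_div (by positivity) two_ne_zero]
  ring

lemma hasDerivAt_KLB_sig (t : ℝ) : HasDerivAt (fun s => KLB (sig s)) (sig t - 1 / 2) t := by
  simp only [KLB_sig]
  have h := (((hasDerivAt_neg t).exp.const_add 1).log (by positivity)).add
    ((hasDerivAt_id t).div_const 2) |>.sub_const (log 2)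
  refine h.congr_deriv ?_
  unfold sig
  field_simp
  ring

lemma strictConvexOn_KLB_sig : StrictConvexOn ℝ univ (fun t => KLB (sig t)) := by
  refine StrictMono.strictConvexOn_univ_of_deriv
    (continuous_iff_continuousAt.2 fun t => (hasDerivAt_KLB_sig t).continuousAt) ?_
  rw [funext fun t => (hasDerivAt_KLB_sig t).deriv]
  exact fun s t hst => sub_lt_sub_right (sig_strictMono hst) _

end Sigmoid

section Pairwise

open Real Set Finset

lemma sum_mul_sum_comm {A B : Type*} [Fintype A] [Fintype B] (u : A → ℝ) (v : B → ℝ)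
    (F : A → B → ℝ) : ∑ a, u a * ∑ b, v b * F a b = ∑ b, v b * ∑ a, u a * F a b := by
  simp only [mul_sum]
  rw [sum_comm]
  simp only [mul_left_comm]

variable {Z : Type*} [Fintype Z]

noncomputable def pairwiseLoss (ν : Z → ℝ) (f : ℝ → ℝ) (r : Z → ℝ) : ℝ :=
  ∑ z1, ∑ z2, ν z1 * ν z2 * f (r z1 - r z2)

noncomputable def rewardObjective (κ : ℝ) (ν : Z → ℝ) (f : ℝ → ℝ) (w r : Z → ℝ) : ℝ :=
  κ * pairwiseLoss ν f r - ∑ z, w z * r z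

noncomputable def implicitReward (β : ℝ) (q p : Z → ℝ) (z : Z) : ℝ :=
  β * log (p z / q z)

noncomputable def edpoLoss (α β : ℝ) (ν q w p : Z → ℝ) : ℝ :=
  -β * (∑ z, w z * log (p z))
    + (α / 2) * pairwiseLoss ν (fun t => KLB (sig t)) (implicitReward β q p)

variable {ν : Z → ℝ} {f : ℝ → ℝ}

lemma pairwiseLoss_eq_sum_mul_sum (r : Z → ℝ) :
    pairwiseLoss ν f r = ∑ z1, ν z1 * ∑ z2, ν z2 * f (r z1 - r z2) := by
  simp only [pairwiseLoss, mul_sum, mul_assoc]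

lemma pairwiseLoss_add_const (r : Z → ℝ) (c : ℝ) :
    pairwiseLoss ν f (fun z => r z + c) = pairwiseLoss ν f r := by
  simp only [pairwiseLoss, add_sub_add_right_eq_sub]

lemma pairwiseLoss_midpoint_lt (hν : ∀ z, 0 < ν z) (hf : StrictConvexOn ℝ univ f)
    {r r' : Z → ℝ} {a b : Z} (hab : r a - r b ≠ r' a - r' b) :
    pairwiseLoss ν f (fun z => (r z + r' z) / 2)
      < (pairwiseLoss ν f r + pairwiseLoss ν f r') / 2 := by
  have hmid : ∀ x y : ℝ, f ((1 / 2 : ℝ) • x + (1 / 2 : ℝ) • y) = f ((x + y) / 2) := fun x y => by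
    congr 1; simp only [smul_eq_mul]; ring
  have hterm : ∀ p : Z × Z, ν p.1 * ν p.2 * f ((r p.1 + r' p.1) / 2 - (r p.2 + r' p.2) / 2)
      = ν p.1 * ν p.2 * f (((r p.1 - r p.2) + (r' p.1 - r' p.2)) / 2) := fun p => by
    congr 2; ring
  simp only [pairwiseLoss, ← Fintype.sum_prod_type', hterm, ← sum_add_distrib, sum_div]
  refine sum_lt_sum (fun p _ => ?_) ⟨(a, b), mem_univ _, ?_⟩
  · have h := hf.convexOn.2 (mem_univ (r p.1 - r p.2)) (mem_univ (r' p.1 - r' p.2))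
      (by norm_num : (0 : ℝ) ≤ 1 / 2) (by norm_num : (0 : ℝ) ≤ 1 / 2) (by norm_num)
    rw [hmid, smul_eq_mul, smul_eq_mul] at h
    nlinarith [mul_nonneg (hν p.1).le (hν p.2).le]
  · have h := hf.2 (mem_univ (r a - r b)) (mem_univ (r' a - r' b)) hab
      (by norm_num : (0 : ℝ) < 1 / 2) (by norm_num : (0 : ℝ) < 1 / 2) (by norm_num)
    rw [hmid, smul_eq_mul, smul_eq_mul] at h
    nlinarith [mul_pos (hν a) (hν b)]

variable {κ : ℝ} {w : Z → ℝ}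

lemma rewardObjective_add_const (hw : ∑ z, w z = 0) (r : Z → ℝ) (c : ℝ) :
    rewardObjective κ ν f w (fun z => r z + c) = rewardObjective κ ν f w r := by
  simp only [rewardObjective, pairwiseLoss_add_const, mul_add, sum_add_distrib, ← sum_mul, hw,
    zero_mul, add_zero]

lemma exists_eq_add_const_of_rewardObjective_le (hκ : 0 < κ) (hν : ∀ z, 0 < ν z)
    (hf : StrictConvexOn ℝ univ f) {r r' : Z → ℝ}
    (hmin : ∀ s, rewardObjective κ ν f w r ≤ rewardObjective κ ν f w s)
    (hle : rewardObjective κ ν f w r' ≤ rewardObjective κ ν f w r) :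
    ∃ c, ∀ z, r' z = r z + c := by
  by_contra! hne
  obtain ⟨a, -⟩ := hne 0
  obtain ⟨b, hb⟩ := hne (r' a - r a)
  have hab : r b - r a ≠ r' b - r' a := fun h => hb (by linarith)
  have hmid := hmin (fun z => (r z + r' z) / 2)
  have hlin : ∑ z, w z * ((r z + r' z) / 2) = (∑ z, w z * r z + ∑ z, w z * r' z) / 2 := by
    rw [← sum_add_distrib, sum_div]; congr 1; ext z; ring
  simp only [rewardObjective, hlin] at hmid hle
  nlinarith [mul_lt_mul_of_pos_left (pairwiseLoss_midpoint_lt hν hf hab) hκ]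

variable {q : Z → ℝ} {α β : ℝ}

lemma edpoLoss_eq {p : Z → ℝ} (hp : ∀ z, 0 < p z) (hq : ∀ z, 0 < q z) :
    edpoLoss α β ν q w p = rewardObjective (α / 2) ν (fun t => KLB (sig t)) w
      (implicitReward β q p) - β * ∑ z, w z * log (q z) := by
  have hlog : ∀ z, β * (w z * log (p z))
      = w z * implicitReward β q p z + β * (w z * log (q z)) := fun z => by
    rw [implicitReward, log_div (hp z).ne' (hq z).ne']; ring
  have hsum : β * ∑ z, w z * log (p z)
      = ∑ z, w z * implicitReward β q p z + β * ∑ z, w z * log (q z) := by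
    simp only [mul_sum, hlog, sum_add_distrib]
  rw [edpoLoss, rewardObjective, neg_mul, hsum]
  ring

lemma rewardObjective_le_of_forall_edpoLoss_le [Nonempty Z] (hβ : β ≠ 0) (hq : ∀ z, 0 < q z)
    (hw : ∑ z, w z = 0) {p : Z → ℝ} (hp : ∀ z, 0 < p z)
    (hmin : ∀ p' : Z → ℝ, (∀ z, 0 < p' z) → ∑ z, p' z = 1 →
      edpoLoss α β ν q w p ≤ edpoLoss α β ν q w p') (r : Z → ℝ) :
    rewardObjective (α / 2) ν (fun t => KLB (sig t)) w (implicitReward β q p)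
      ≤ rewardObjective (α / 2) ν (fun t => KLB (sig t)) w r := by
  set S := ∑ z, q z * exp (r z / β)
  have hS : 0 < S := sum_pos (fun z _ => by have := hq z; positivity) univ_nonempty
  set p' : Z → ℝ := fun z => q z * exp (r z / β) / S
  have hp' : ∀ z, 0 < p' z := fun z => by have := hq z; positivity
  have hr : implicitReward β q p' = fun z => r z + -(β * log S) := by
    ext z
    have hz : p' z / q z = exp (r z / β) / S := by
      simp only [p']; field_simp [(hq z).ne']
    rw [implicitReward, hz, log_div (exp_pos _).ne' hS.ne', log_exp]
    field_simp
    ring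
  have h := hmin p' hp' (by rw [← sum_div]; exact div_self hS.ne')
  rwa [edpoLoss_eq hp hq, edpoLoss_eq hp' hq, hr, rewardObjective_add_const hw,
    sub_le_sub_iff_right] at h

lemma eq_of_implicitReward_eq_add_const (hβ : β ≠ 0) (hq : ∀ z, q z ≠ 0) {p p' : Z → ℝ}
    (hp : ∀ z, 0 < p z) (hp' : ∀ z, 0 < p' z) (hsum : ∑ z, p z = ∑ z, p' z)
    (hsum0 : ∑ z, p' z ≠ 0) {c : ℝ}
    (h : ∀ z, implicitReward β q p z = implicitReward β q p' z + c) : p = p' := by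
  have hscale : ∀ z, p z = exp (c / β) * p' z := fun z => by
    have hz := h z
    rw [implicitReward, implicitReward, log_div (hp z).ne' (hq z),
      log_div (hp' z).ne' (hq z)] at hz
    have : log (p z) = log (p' z) + c / β := by field_simp; linarith
    rw [← exp_log (hp z), this, exp_add, exp_log (hp' z), mul_comm]
  have hc : exp (c / β) = 1 := by
    simp only [hscale, ← mul_sum] at hsum
    exact (mul_eq_right₀ hsum0).1 hsum
  ext z
  rw [hscale, hc, one_mul]

end Pairwise

namespace HyperResponse

open Real Set Finset

variable {Y : Type*} [DecidableEq Y] (H : Finset Y)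

/-- The summand `Unit` is the hyper-response that stands for all of `H`. -/
def collapse {α : Type*} (g : Y → α) (c : α) : {y : Y // y ∉ H} ⊕ Unit → α :=
  Sum.elim (fun y => g y) (fun _ => c)

def uncollapse {α : Type*} (τ : {y : Y // y ∉ H} ⊕ Unit → α) (y : Y) : α :=
  if h : y ∈ H then τ (Sum.inr ()) else τ (Sum.inl ⟨y, h⟩)

noncomputable def expand (q ρ : Y → ℝ) (ρH : ℝ) (y : Y) : ℝ :=
  if y ∈ H then ρH / (∑ x ∈ H, q x) * q y else ρ y

variable {H}

omit [DecidableEq Y] in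
lemma collapse_pos {g : Y → ℝ} {c : ℝ} (hg : ∀ y ∉ H, 0 < g y) (hc : 0 < c) (z) :
    0 < collapse H g c z := by
  rcases z with ⟨y, hy⟩ | _
  exacts [hg y hy, hc]

lemma collapse_uncollapse {α : Type*} (τ : {y : Y // y ∉ H} ⊕ Unit → α) :
    collapse H (uncollapse H τ) (τ (Sum.inr ())) = τ := by
  funext z
  rcases z with ⟨y, hy⟩ | ⟨⟩
  · simp [collapse, uncollapse, hy]
  · rfl

lemma uncollapse_of_mem {α : Type*} (τ : {y : Y // y ∉ H} ⊕ Unit → α) {y : Y} (hy : y ∈ H) :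
    uncollapse H τ y = τ (Sum.inr ()) :=
  dif_pos hy

omit [DecidableEq Y] in
lemma comp_collapse {α β : Type*} (φ : α → β) (g : Y → α) (c : α) (z) :
    φ (collapse H g c z) = collapse H (fun y => φ (g y)) (φ c) z := by
  cases z <;> rfl

omit [DecidableEq Y] in
lemma collapse_mul (ν g : Y → ℝ) (W c : ℝ) (z) :
    collapse H ν W z * collapse H g c z = collapse H (fun y => ν y * g y) (W * c) z := by
  cases z <;> rfl

variable [Fintype Y]

lemma sum_collapse (g : Y → ℝ) (c : ℝ) : ∑ z, collapse H g c z = ∑ y ∈ Hᶜ, g y + c := by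
  simp only [Fintype.sum_sum_type, collapse, Sum.elim_inl, Sum.elim_inr, Fintype.sum_unique]
  rw [← sum_subtype Hᶜ (fun y => mem_compl) g]

lemma sum_collapse_zero {w : Y → ℝ} (hw : ∀ y ∈ H, w y = 0) :
    ∑ z, collapse H w 0 z = ∑ y, w y := by
  rw [sum_collapse, add_zero, ← sum_compl_add_sum H w, sum_eq_zero hw, add_zero]

lemma sum_collapse_zero_mul {w : Y → ℝ} (hw : ∀ y ∈ H, w y = 0) (r : Y → ℝ) (c : ℝ) :
    ∑ z, collapse H w 0 z * collapse H r c z = ∑ y, w y * r y := by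
  simp only [collapse_mul, sum_collapse, zero_mul, add_zero]
  rw [← sum_compl_add_sum H, sum_eq_zero (s := H) fun y hy => by rw [hw y hy, zero_mul], add_zero]

lemma sum_collapse_mul_eq (ν : Y → ℝ) {r : Y → ℝ} {c : ℝ} (hr : ∀ y ∈ H, r y = c)
    (φ : ℝ → ℝ) :
    ∑ z, collapse H ν (∑ y ∈ H, ν y) z * φ (collapse H r c z) = ∑ y, ν y * φ (r y) := by
  simp only [comp_collapse φ, collapse_mul, sum_collapse, sum_mul,
    ← sum_compl_add_sum H (fun y => ν y * φ (r y))]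
  congr 1
  exact sum_congr rfl fun y hy => by rw [hr y hy]

lemma sum_collapse_mul_centerMass_le {ν : Y → ℝ} (hν : ∀ y, 0 ≤ ν y)
    (hH : 0 < ∑ y ∈ H, ν y) {g : ℝ → ℝ} (hg : ConvexOn ℝ univ g) (r : Y → ℝ) :
    ∑ z, collapse H ν (∑ y ∈ H, ν y) z * g (collapse H r (H.centerMass ν r) z)
      ≤ ∑ y, ν y * g (r y) := by
  have hJensen := hg.map_centerMass_le (fun y _ => hν y) hH (fun y _ => mem_univ (r y))
  simp only [centerMass, smul_eq_mul, Function.comp_apply] at hJensen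
  rw [le_inv_mul_iff₀ hH] at hJensen
  simp only [comp_collapse g, collapse_mul, sum_collapse, centerMass, smul_eq_mul,
    ← sum_compl_add_sum H (fun y => ν y * g (r y))]
  linarith

variable {ν : Y → ℝ} {f : ℝ → ℝ}

lemma pairwiseLoss_collapse {r : Y → ℝ} {c : ℝ} (hr : ∀ y ∈ H, r y = c) :
    pairwiseLoss (collapse H ν (∑ y ∈ H, ν y)) f (collapse H r c) = pairwiseLoss ν f r := by
  calc _ = ∑ z, collapse H ν (∑ y ∈ H, ν y) z * ∑ y, ν y * f (collapse H r c z - r y) := by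
        rw [pairwiseLoss_eq_sum_mul_sum]
        exact sum_congr rfl fun z _ => by
          rw [sum_collapse_mul_eq ν hr fun t => f (collapse H r c z - t)]
    _ = ∑ y, ν y * ∑ z, collapse H ν (∑ y ∈ H, ν y) z * f (collapse H r c z - r y) :=
        sum_mul_sum_comm _ _ _
    _ = pairwiseLoss ν f r := by
        rw [pairwiseLoss_eq_sum_mul_sum, sum_mul_sum_comm ν ν]
        exact sum_congr rfl fun y _ => by rw [sum_collapse_mul_eq ν hr fun t => f (t - r y)]

lemma pairwiseLoss_collapse_centerMass_le (hν : ∀ y, 0 ≤ ν y) (hH : 0 < ∑ y ∈ H, ν y)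
    (hf : ConvexOn ℝ univ f) (r : Y → ℝ) :
    pairwiseLoss (collapse H ν (∑ y ∈ H, ν y)) f (collapse H r (H.centerMass ν r))
      ≤ pairwiseLoss ν f r := by
  set r' := collapse H r (H.centerMass ν r)
  have hν' : ∀ z, 0 ≤ collapse H ν (∑ y ∈ H, ν y) z := by
    rintro (y | _)
    exacts [hν y, hH.le]
  calc _ ≤ ∑ z, collapse H ν (∑ y ∈ H, ν y) z * ∑ y, ν y * f (r' z - r y) := by
        rw [pairwiseLoss_eq_sum_mul_sum]
        gcongr with z _
        exacts [hν' z, sum_collapse_mul_centerMass_le hν hH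
          (hf.comp_affineMap (AffineMap.const ℝ ℝ (r' z) - AffineMap.id ℝ ℝ)) r]
    _ = ∑ y, ν y * ∑ z, collapse H ν (∑ y ∈ H, ν y) z * f (r' z - r y) :=
        sum_mul_sum_comm _ _ _
    _ ≤ pairwiseLoss ν f r := by
        rw [pairwiseLoss_eq_sum_mul_sum, sum_mul_sum_comm ν ν]
        gcongr with y _
        exacts [hν y, sum_collapse_mul_centerMass_le hν hH
          (hf.comp_affineMap (AffineMap.id ℝ ℝ - AffineMap.const ℝ ℝ (r y))) r]

variable {κ : ℝ} {w : Y → ℝ}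

lemma rewardObjective_collapse (hw : ∀ y ∈ H, w y = 0) {r : Y → ℝ} {c : ℝ}
    (hr : ∀ y ∈ H, r y = c) :
    rewardObjective κ (collapse H ν (∑ y ∈ H, ν y)) f (collapse H w 0) (collapse H r c)
      = rewardObjective κ ν f w r := by
  rw [rewardObjective, rewardObjective, pairwiseLoss_collapse hr, sum_collapse_zero_mul hw]

lemma rewardObjective_collapse_centerMass_le (hκ : 0 ≤ κ) (hν : ∀ y, 0 ≤ ν y)
    (hH : 0 < ∑ y ∈ H, ν y) (hf : ConvexOn ℝ univ f) (hw : ∀ y ∈ H, w y = 0) (r : Y → ℝ) :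
    rewardObjective κ (collapse H ν (∑ y ∈ H, ν y)) f (collapse H w 0)
        (collapse H r (H.centerMass ν r)) ≤ rewardObjective κ ν f w r := by
  rw [rewardObjective, rewardObjective, sum_collapse_zero_mul hw]
  gcongr
  exact pairwiseLoss_collapse_centerMass_le hν hH hf r

lemma rewardObjective_uncollapse_le (hκ : 0 ≤ κ) (hν : ∀ y, 0 ≤ ν y)
    (hH : 0 < ∑ y ∈ H, ν y) (hf : ConvexOn ℝ univ f) (hw : ∀ y ∈ H, w y = 0)
    {s : {y : Y // y ∉ H} ⊕ Unit → ℝ}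
    (hs : ∀ s', rewardObjective κ (collapse H ν (∑ y ∈ H, ν y)) f (collapse H w 0) s
      ≤ rewardObjective κ (collapse H ν (∑ y ∈ H, ν y)) f (collapse H w 0) s') (r : Y → ℝ) :
    rewardObjective κ ν f w (uncollapse H s) ≤ rewardObjective κ ν f w r := by
  calc _ = rewardObjective κ (collapse H ν (∑ y ∈ H, ν y)) f (collapse H w 0) s := by
        rw [← rewardObjective_collapse hw fun y hy => uncollapse_of_mem s hy,
          collapse_uncollapse]
    _ ≤ _ := hs (collapse H r (H.centerMass ν r))
    _ ≤ _ := rewardObjective_collapse_centerMass_le hκ hν hH hf hw r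

lemma forall_le_of_forall_collapse_le {Φ : ({y : Y // y ∉ H} ⊕ Unit → ℝ) → ℝ}
    {τ₀ : {y : Y // y ∉ H} ⊕ Unit → ℝ}
    (h : ∀ (ρ : Y → ℝ) (ρH : ℝ), (∀ y ∉ H, 0 < ρ y) → 0 < ρH → ∑ y ∈ Hᶜ, ρ y + ρH = 1 →
      Φ τ₀ ≤ Φ (collapse H ρ ρH))
    (τ : {y : Y // y ∉ H} ⊕ Unit → ℝ) (hτ : ∀ z, 0 < τ z) (hτ1 : ∑ z, τ z = 1) :
    Φ τ₀ ≤ Φ τ := by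
  have hpos : ∀ y, 0 < uncollapse H τ y := fun y => by
    unfold uncollapse; split_ifs <;> exact hτ _
  simpa only [collapse_uncollapse] using h (uncollapse H τ) (τ (Sum.inr ())) (fun y _ => hpos y)
    (hτ _) (by rw [← sum_collapse, collapse_uncollapse, hτ1])

lemma edpoLoss_collapse (α β : ℝ) (ν q w ρ : Y → ℝ) (ρH : ℝ) :
    edpoLoss α β (collapse H ν (∑ y ∈ H, ν y)) (collapse H q (∑ y ∈ H, q y)) (collapse H w 0)
        (collapse H ρ ρH)
      = -β * (∑ y ∈ Hᶜ, w y * Real.log (ρ y))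
        + (α/2) * ∑ z1 : {y : Y // y ∉ H} ⊕ Unit, ∑ z2 : {y : Y // y ∉ H} ⊕ Unit,
            (Sum.elim (fun y => ν y.1) (fun _ => ∑ y ∈ H, ν y) z1) *
            (Sum.elim (fun y => ν y.1) (fun _ => ∑ y ∈ H, ν y) z2) *
            KLB (sig
              ((Sum.elim (fun y => β * Real.log (ρ y.1 / q y.1))
                  (fun _ => β * Real.log (ρH / ∑ y ∈ H, q y)) z1)
               - (Sum.elim (fun y => β * Real.log (ρ y.1 / q y.1))
                  (fun _ => β * Real.log (ρH / ∑ y ∈ H, q y)) z2))) := by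
  have hr : implicitReward β (collapse H q (∑ y ∈ H, q y)) (collapse H ρ ρH)
      = Sum.elim (fun y => β * Real.log (ρ y.1 / q y.1))
          (fun _ => β * Real.log (ρH / ∑ y ∈ H, q y)) := by
    funext z; cases z <;> rfl
  simp only [edpoLoss, pairwiseLoss, hr, comp_collapse Real.log, collapse_mul, sum_collapse,
    zero_mul, add_zero]
  rfl

variable {q ρ : Y → ℝ} {ρH : ℝ}

omit [Fintype Y] in
lemma expand_of_mem {y : Y} (hy : y ∈ H) : expand H q ρ ρH y = ρH / (∑ x ∈ H, q x) * q y :=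
  if_pos hy

omit [Fintype Y] in
lemma expand_of_not_mem {y : Y} (hy : y ∉ H) : expand H q ρ ρH y = ρ y :=
  if_neg hy

omit [Fintype Y] in
lemma expand_pos (hq : ∀ y, 0 < q y) (hH : H.Nonempty) (hρ : ∀ y ∉ H, 0 < ρ y) (hρH : 0 < ρH)
    (y : Y) : 0 < expand H q ρ ρH y := by
  have := sum_pos (fun x _ => hq x) hH
  unfold expand
  split_ifs with hy
  exacts [by have := hq y; positivity, hρ y hy]

omit [Fintype Y] in
lemma sum_expand_of_mem (hH : ∑ x ∈ H, q x ≠ 0) : ∑ y ∈ H, expand H q ρ ρH y = ρH := by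
  rw [sum_congr rfl fun y hy => expand_of_mem hy, ← mul_sum, div_mul_cancel₀ _ hH]

lemma sum_expand (hH : ∑ x ∈ H, q x ≠ 0) : ∑ y, expand H q ρ ρH y = ∑ y ∈ Hᶜ, ρ y + ρH := by
  rw [← sum_compl_add_sum H, sum_expand_of_mem hH,
    sum_congr rfl fun y hy => expand_of_not_mem (mem_compl.1 hy)]

omit [Fintype Y] in
lemma implicitReward_expand (β : ℝ) (hq : ∀ y, q y ≠ 0) :
    implicitReward β q (expand H q ρ ρH)
      = uncollapse H (implicitReward β (collapse H q (∑ y ∈ H, q y)) (collapse H ρ ρH)) := by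
  funext y
  by_cases hy : y ∈ H
  · rw [uncollapse_of_mem _ hy, implicitReward, expand_of_mem hy, mul_div_cancel_right₀ _ (hq y)]
    rfl
  · rw [implicitReward, expand_of_not_mem hy, uncollapse, dif_neg hy]
    rfl

end HyperResponse

open Finset HyperResponse

theorem stmt_8_general {Y : Type*} [Fintype Y] [Nonempty Y] [DecidableEq Y]
    (H : Finset Y) (hHne : H.Nonempty)
    (μ : Y → ℝ) (hμ : ∀ y, 0 < μ y)
    (πref : Y → ℝ) (href : ∀ y, 0 < πref y)
    (μhat : Y → ℝ)
    (hμhatH : ∀ y ∈ H, μhat y = 0)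
    (shat : Y → ℝ) (hshat : ∑ y, μhat y * shat y = 0)
    (α β : ℝ) (hα : 0 < α) (hβ : 0 < β)
    -- the sample-based eDPO loss on Δ
    (LeDPO : (Y → ℝ) → ℝ)
    (hLeDPO : ∀ π : Y → ℝ, LeDPO π =
      -β * (∑ y, μhat y * shat y * Real.log (π y))
        + (α/2) * ∑ y1, ∑ y2, μ y1 * μ y2 *
            KLB (sig (β * Real.log (π y1 / πref y1) - β * Real.log (π y2 / πref y2))))
    -- the PRO loss on the hyper-response simplex Δ_H
    (LPRO : (Y → ℝ) → ℝ → ℝ)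
    (hLPRO : ∀ (ρ : Y → ℝ) (ρH : ℝ), LPRO ρ ρH =
      -β * (∑ y ∈ Hᶜ, μhat y * shat y * Real.log (ρ y))
        + (α/2) * ∑ z1 : {y : Y // y ∉ H} ⊕ Unit, ∑ z2 : {y : Y // y ∉ H} ⊕ Unit,
            (Sum.elim (fun y => μ y.1) (fun _ => ∑ y ∈ H, μ y) z1) *
            (Sum.elim (fun y => μ y.1) (fun _ => ∑ y ∈ H, μ y) z2) *
            KLB (sig
              ((Sum.elim (fun y => β * Real.log (ρ y.1 / πref y.1))
                  (fun _ => β * Real.log (ρH / ∑ y ∈ H, πref y)) z1)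
               - (Sum.elim (fun y => β * Real.log (ρ y.1 / πref y.1))
                  (fun _ => β * Real.log (ρH / ∑ y ∈ H, πref y)) z2))))
    -- π* minimizes LeDPO over Δ
    (πstar : Y → ℝ) (hπstar : ∀ y, 0 < πstar y) (hπstar1 : ∑ y, πstar y = 1)
    (hminE : ∀ π : Y → ℝ, (∀ y, 0 < π y) → (∑ y, π y = 1) → LeDPO πstar ≤ LeDPO π)
    -- (ρ*, ρH*) minimizes LPRO over Δ_H
    (ρstar : Y → ℝ) (ρHstar : ℝ)
    (hρstar : ∀ y ∉ H, 0 < ρstar y) (hρHstar : 0 < ρHstar)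
    (hρ1 : (∑ y ∈ Hᶜ, ρstar y) + ρHstar = 1)
    (hminP : ∀ (ρ : Y → ℝ) (ρH : ℝ), (∀ y ∉ H, 0 < ρ y) → 0 < ρH →
      (∑ y ∈ Hᶜ, ρ y) + ρH = 1 → LPRO ρstar ρHstar ≤ LPRO ρ ρH) :
    ∃ C : ℝ, 0 < C ∧
      (∀ y ∈ H, πstar y = C * πref y) ∧
      (∀ y ∉ H, ρstar y = πstar y) ∧
      ρHstar = ∑ y ∈ H, πstar y ∧
      ρHstar = C * ∑ y ∈ H, πref y := by
  set w : Y → ℝ := fun y => μhat y * shat y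
  set T := ∑ y ∈ H, πref y
  have hwH : ∀ y ∈ H, w y = 0 := fun y hy => by simp only [w, hμhatH y hy, zero_mul]
  have hT : 0 < T := sum_pos (fun y _ => href y) hHne
  have hLE : ∀ p, LeDPO p = edpoLoss α β μ πref w p := hLeDPO
  have hLP : ∀ ρ ρH, LPRO ρ ρH = edpoLoss α β (collapse H μ (∑ y ∈ H, μ y)) (collapse H πref T)
      (collapse H w 0) (collapse H ρ ρH) := fun ρ ρH => by rw [hLPRO, edpoLoss_collapse]
  have hminY := rewardObjective_le_of_forall_edpoLoss_le hβ.ne' href hshat hπstar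
    fun p hp hp1 => by rw [← hLE, ← hLE]; exact hminE p hp hp1
  have hminZ := rewardObjective_le_of_forall_edpoLoss_le hβ.ne'
    (collapse_pos (fun y _ => href y) hT) ((sum_collapse_zero hwH).trans hshat)
    (collapse_pos hρstar hρHstar)
    (forall_le_of_forall_collapse_le fun ρ ρH hρ hρH hρ1 => by
      rw [← hLP, ← hLP]; exact hminP ρ ρH hρ hρH hρ1)
  obtain ⟨c, hc⟩ := exists_eq_add_const_of_rewardObjective_le (by positivity) hμ
    strictConvexOn_KLB_sig hminY
    (rewardObjective_uncollapse_le (by positivity) (fun y => (hμ y).le)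
      (sum_pos (fun y _ => hμ y) hHne) strictConvexOn_KLB_sig.convexOn hwH hminZ _)
  rw [← implicitReward_expand β fun y => (href y).ne'] at hc
  have hexpand : expand H πref ρstar ρHstar = πstar :=
    eq_of_implicitReward_eq_add_const hβ.ne' (fun y => (href y).ne')
      (expand_pos href hHne hρstar hρHstar) hπstar (by rw [sum_expand hT.ne', hρ1, hπstar1])
      (by rw [hπstar1]; exact one_ne_zero) hc
  refine ⟨ρHstar / T, by positivity, fun y hy => ?_, fun y hy => ?_, ?_, ?_⟩
  · rw [← hexpand, expand_of_mem hy]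
  · rw [← hexpand, expand_of_not_mem hy]
  · rw [← hexpand, sum_expand_of_mem hT.ne']
  · rw [div_mul_cancel₀ _ hT.ne']

theorem stmt_8 {Y : Type*} [Fintype Y] [Nonempty Y] [DecidableEq Y]
    (H : Finset Y) (hHne : H.Nonempty) (hHproper : H ≠ Finset.univ)
    (μ : Y → ℝ) (hμ : ∀ y, 0 < μ y) (hμ1 : ∑ y, μ y = 1)
    (πref : Y → ℝ) (href : ∀ y, 0 < πref y) (href1 : ∑ y, πref y = 1)
    (μhat : Y → ℝ) (hμhat0 : ∀ y, 0 ≤ μhat y) (hμhat1 : ∑ y, μhat y = 1)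
    (hμhatH : ∀ y ∈ H, μhat y = 0)
    (shat : Y → ℝ) (hshat : ∑ y, μhat y * shat y = 0)
    (α β : ℝ) (hα : 0 < α) (hβ : 0 < β)
    -- the sample-based eDPO loss on Δ
    (LeDPO : (Y → ℝ) → ℝ)
    (hLeDPO : ∀ π : Y → ℝ, LeDPO π =
      -β * (∑ y, μhat y * shat y * Real.log (π y))
        + (α/2) * ∑ y1, ∑ y2, μ y1 * μ y2 *
            KLB (sig (β * Real.log (π y1 / πref y1) - β * Real.log (π y2 / πref y2))))
    -- the PRO loss on the hyper-response simplex Δ_H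
    (LPRO : (Y → ℝ) → ℝ → ℝ)
    (hLPRO : ∀ (ρ : Y → ℝ) (ρH : ℝ), LPRO ρ ρH =
      -β * (∑ y ∈ Hᶜ, μhat y * shat y * Real.log (ρ y))
        + (α/2) * ∑ z1 : {y : Y // y ∉ H} ⊕ Unit, ∑ z2 : {y : Y // y ∉ H} ⊕ Unit,
            (Sum.elim (fun y => μ y.1) (fun _ => ∑ y ∈ H, μ y) z1) *
            (Sum.elim (fun y => μ y.1) (fun _ => ∑ y ∈ H, μ y) z2) *
            KLB (sig
              ((Sum.elim (fun y => β * Real.log (ρ y.1 / πref y.1))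
                  (fun _ => β * Real.log (ρH / ∑ y ∈ H, πref y)) z1)
               - (Sum.elim (fun y => β * Real.log (ρ y.1 / πref y.1))
                  (fun _ => β * Real.log (ρH / ∑ y ∈ H, πref y)) z2))))
    -- π* minimizes LeDPO over Δ
    (πstar : Y → ℝ) (hπstar : ∀ y, 0 < πstar y) (hπstar1 : ∑ y, πstar y = 1)
    (hminE : ∀ π : Y → ℝ, (∀ y, 0 < π y) → (∑ y, π y = 1) → LeDPO πstar ≤ LeDPO π)
    -- (ρ*, ρH*) minimizes LPRO over Δ_H
    (ρstar : Y → ℝ) (ρHstar : ℝ)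
    (hρstar : ∀ y ∉ H, 0 < ρstar y) (hρHstar : 0 < ρHstar)
    (hρ1 : (∑ y ∈ Hᶜ, ρstar y) + ρHstar = 1)
    (hminP : ∀ (ρ : Y → ℝ) (ρH : ℝ), (∀ y ∉ H, 0 < ρ y) → 0 < ρH →
      (∑ y ∈ Hᶜ, ρ y) + ρH = 1 → LPRO ρstar ρHstar ≤ LPRO ρ ρH) :
    ∃ C : ℝ, 0 < C ∧
      (∀ y ∈ H, πstar y = C * πref y) ∧
      (∀ y ∉ H, ρstar y = πstar y) ∧
      ρHstar = ∑ y ∈ H, πstar y ∧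
      ρHstar = C * ∑ y ∈ H, πref y :=
  stmt_8_general H hHne μ hμ πref href μhat hμhatH shat hshat α β hα hβ LeDPO hLeDPO LPRO hLPRO
    πstar hπstar hπstar1 hminE ρstar ρHstar hρstar hρHstar hρ1 hminP
end

section
/- Let α > 0 and β > 0, and define f(δ) := (α/(2β))·KLB(σ(β·δ)). Then for every real δ, f is differentiable at δ with derivative f'(δ) = (α/2)·(σ(β·δ) − 1/2), and this derivative satisfies |f'(δ)| < α/4. In particular, α bounds the maximum gradient magnitude of the PRO regularizer. -/
open Real

lemma sig_eq_sigmoid : sig = sigmoid :=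
  funext fun _ => one_div _

lemma hasDerivAt_KLB {q : ℝ} (hq₀ : 0 < q) (hq₁ : q < 1) :
    HasDerivAt KLB ((q - 1/2) / (q * (1 - q))) q := by
  have hq₁' : 0 < 1 - q := sub_pos.mpr hq₁
  have hlog₀ : HasDerivAt (fun x => log ((1/2) / x)) (-1 / q) q := by
    convert ((hasDerivAt_const q (1/2 : ℝ)).fun_div (hasDerivAt_id' q) hq₀.ne').log
      (by positivity) using 1
    field_simp
    ring
  have hlog₁ : HasDerivAt (fun x => log ((1/2) / (1 - x))) (1 / (1 - q)) q := by
    convert ((hasDerivAt_const q (1/2 : ℝ)).fun_div ((hasDerivAt_id' q).const_sub 1)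
      hq₁'.ne').log (by positivity) using 1
    field_simp
    ring
  refine ((hlog₀.const_mul (1/2)).add (hlog₁.const_mul (1/2))).congr_deriv ?_
  field_simp
  ring

lemma hasDerivAt_KLB_sigmoid (u : ℝ) :
    HasDerivAt (fun u => KLB (sigmoid u)) (sigmoid u - 1/2) u := by
  have hσ₁ : 0 < 1 - sigmoid u := sub_pos.mpr (sigmoid_lt_one u)
  refine ((hasDerivAt_KLB (sigmoid_pos u) (sigmoid_lt_one u)).comp u
    (hasDerivAt_sigmoid u)).congr_deriv ?_
  field_simp [(sigmoid_pos u).ne', hσ₁.ne']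

lemma abs_sigmoid_sub_half_lt (u : ℝ) : |sigmoid u - 1/2| < 1/2 :=
  abs_lt.mpr ⟨by linarith [sigmoid_pos u], by linarith [sigmoid_lt_one u]⟩

theorem stmt_16 (α β : ℝ) (hα : 0 < α) (hβ : 0 < β)
    (f : ℝ → ℝ) (hf : ∀ t, f t = (α / (2*β)) * KLB (sig (β * t))) (δ : ℝ) :
    HasDerivAt f ((α/2) * (sig (β * δ) - 1/2)) δ ∧
      |(α/2) * (sig (β * δ) - 1/2)| < α/4 := by
  rw [sig_eq_sigmoid]
  have hf' : f = fun t => (α / (2*β)) * KLB (sigmoid (β * t)) := by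
    funext t
    rw [hf t, sig_eq_sigmoid]
  constructor
  · rw [hf']
    refine (((hasDerivAt_KLB_sigmoid (β * δ)).comp δ
      ((hasDerivAt_id δ).const_mul β)).const_mul (α / (2*β))).congr_deriv ?_
    field_simp
  · calc |(α/2) * (sigmoid (β * δ) - 1/2)| = α/2 * |sigmoid (β * δ) - 1/2| := by
          rw [abs_mul, abs_of_pos (half_pos hα)]
      _ < α/2 * (1/2) := mul_lt_mul_of_pos_left (abs_sigmoid_sub_half_lt _) (half_pos hα)
      _ = α/4 := by ring
end
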